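/- Let μ be a doubling measure on ℝ, φ doubling with ∫_1^∞ φ(t)/t dt < ∞, and f in the Campanato space (p = 1) with seminorm ‖f‖. Then the averages f_B(r) converge to a finite limit σ(f) as r → ∞, and |f_B(r) − σ(f)| ≤ C ‖f‖ ∫_r^∞ φ(t)/t dt for all r > 0. -/

import Mathlib

/-! For `t ≤ s ≤ 2t` the averages of `f` over `B(0,t)` and `B(0,s)` differ by at most
`C ‖f‖ φ(t)`, because by doubling `B(0,t)` carries a fixed proportion of the mass of `B(0,s)`;
and doubling of `φ` makes `φ(t)` comparable to `∫_t^{2t} φ(x)/x dx`. Chaining these estimates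
along the dyadic radii `r, 2r, 4r, …` bounds `|f_B(r) − f_B(s)|` by `C ‖f‖ ∫_r^∞ φ(t)/t dt` for
all `s ≥ r`. This tail integral tends to zero, so the averages are Cauchy as `r → ∞`, and their
limit inherits the bound. -/

open MeasureTheory Filter Set Topology
open scoped ENNReal

section Averages

variable {α : Type*} [MeasurableSpace α] {μ : Measure α} {f : α → ℝ} {s t : Set α}

theorem abs_setAverage_sub_le_of_subset (hst : s ⊆ t) (hs : μ s ≠ 0) (ht : μ t ≠ ∞)
    (hf : IntegrableOn f t μ) (c : ℝ) :
    |⨍ x in s, f x ∂μ - c| ≤ (μ.real s)⁻¹ * ∫ x in t, |f x - c| ∂μ := by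
  have hs_fin : μ s ≠ ∞ := ne_top_of_le_ne_top ht (measure_mono hst)
  have hs_real : μ.real s ≠ 0 := ENNReal.toReal_ne_zero.2 ⟨hs, hs_fin⟩
  have hsub : ⨍ x in s, f x ∂μ - c = (μ.real s)⁻¹ * ∫ x in s, (f x - c) ∂μ := by
    rw [integral_sub (hf.mono_set hst) (integrableOn_const hs_fin), setIntegral_const,
      setAverage_eq, smul_eq_mul, smul_eq_mul, mul_sub, inv_mul_cancel_left₀ hs_real]
  calc |⨍ x in s, f x ∂μ - c| = (μ.real s)⁻¹ * |∫ x in s, (f x - c) ∂μ| := by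
        rw [hsub, abs_mul, abs_of_nonneg (by positivity)]
    _ ≤ (μ.real s)⁻¹ * ∫ x in s, |f x - c| ∂μ := by
        gcongr; exact abs_integral_le_integral_abs
    _ ≤ (μ.real s)⁻¹ * ∫ x in t, |f x - c| ∂μ := by
        refine mul_le_mul_of_nonneg_left ?_ (by positivity)
        exact setIntegral_mono_set ((hf.sub (integrableOn_const ht)).abs)
          (ae_of_all _ fun _ ↦ abs_nonneg _) hst.eventuallyLE

theorem abs_setAverage_sub_setAverage_le (hst : s ⊆ t) (hs : μ s ≠ 0) (ht : μ t ≠ ∞)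
    (hf : IntegrableOn f t μ) {C ε : ℝ} (hε : 0 ≤ ε) (hμ : μ.real t ≤ C * μ.real s)
    (hosc : ∫ x in t, |f x - ⨍ y in t, f y ∂μ| ∂μ ≤ ε * μ.real t) :
    |⨍ x in s, f x ∂μ - ⨍ x in t, f x ∂μ| ≤ C * ε := by
  have hs_pos : 0 < μ.real s :=
    ENNReal.toReal_pos hs (ne_top_of_le_ne_top ht (measure_mono hst))
  calc |⨍ x in s, f x ∂μ - ⨍ x in t, f x ∂μ|
      ≤ (μ.real s)⁻¹ * (ε * μ.real t) :=
        (abs_setAverage_sub_le_of_subset hst hs ht hf _).trans (by gcongr)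
    _ ≤ (μ.real s)⁻¹ * (ε * (C * μ.real s)) := by gcongr
    _ = C * ε := by field_simp

end Averages

theorem measureReal_Ioo_le_of_doubling {μ : Measure ℝ} {C₀ t s : ℝ} (hC₀ : 0 ≤ C₀)
    (hdub : μ (Ioo (-(2 * t)) (2 * t)) ≤ ENNReal.ofReal C₀ * μ (Ioo (-t) t))
    (ht : μ (Ioo (-t) t) ≠ ∞) (hs : s ≤ 2 * t) :
    μ.real (Ioo (-s) s) ≤ C₀ * μ.real (Ioo (-t) t) := by
  have h := (measure_mono (Ioo_subset_Ioo (neg_le_neg hs) hs)).trans hdub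
  have := ENNReal.toReal_mono (ENNReal.mul_ne_top ENNReal.ofReal_ne_top ht) h
  rwa [ENNReal.toReal_mul, ENNReal.toReal_ofReal hC₀] at this

def IsDoublingWith (C : ℝ) (φ : ℝ → ℝ) : Prop :=
  ∀ t s, 0 < t → t ≤ s → s ≤ 2 * t → φ s ≤ C * φ t ∧ φ t ≤ C * φ s

theorem isDoublingWith_of_ratio_bounds {φ : ℝ → ℝ} {C : ℝ} (hpos : ∀ r, 0 < r → 0 < φ r)
    (hφ : ∀ r s : ℝ, 0 < r → 0 < s → 1/2 ≤ r / s → r / s ≤ 2 →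
      1 / C ≤ φ r / φ s ∧ φ r / φ s ≤ C) :
    IsDoublingWith C φ := by
  intro t s ht hts hs
  have hs0 : 0 < s := ht.trans_le hts
  constructor
  · have h := (hφ s t hs0 ht (by rw [le_div_iff₀ ht]; linarith)
      (by rw [div_le_iff₀ ht]; linarith)).2
    rwa [div_le_iff₀ (hpos t ht)] at h
  · have h := (hφ t s ht hs0 (by rw [le_div_iff₀ hs0]; linarith)
      (by rw [div_le_iff₀ hs0]; linarith)).2
    rwa [div_le_iff₀ (hpos s hs0)] at h

namespace IsDoublingWith

variable {φ : ℝ → ℝ} {C a : ℝ}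

theorem integrableOn_Ioc_div (hφ : IsDoublingWith C φ) (hpos : ∀ r, 0 < r → 0 < φ r)
    (hm : Measurable φ) (ha : 0 < a) :
    IntegrableOn (fun x ↦ φ x / x) (Ioc a (2 * a)) := by
  refine Measure.integrableOn_of_bounded (M := C * φ a / a) measure_Ioc_lt_top.ne
    (hm.div measurable_id).aestronglyMeasurable ?_
  filter_upwards [ae_restrict_mem measurableSet_Ioc] with x hx
  have hx0 : 0 < x := ha.trans hx.1
  rw [norm_div, Real.norm_of_nonneg (hpos x hx0).le, Real.norm_of_nonneg hx0.le]
  exact div_le_div₀ (le_trans (hpos x hx0).le (hφ a x ha hx.1.le hx.2).1)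
    (hφ a x ha hx.1.le hx.2).1 ha hx.1.le

theorem le_mul_setIntegral_Ioc_div (hφ : IsDoublingWith C φ) (hpos : ∀ r, 0 < r → 0 < φ r)
    (hm : Measurable φ) (hC : 0 < C) (ha : 0 < a) :
    φ a ≤ 2 * C * ∫ x in Ioc a (2 * a), φ x / x := by
  have hlow : ∀ x ∈ Ioc a (2 * a), φ a / (2 * C * a) ≤ φ x / x := by
    intro x hx
    have hx0 : 0 < x := ha.trans hx.1
    rw [div_le_div_iff₀ (by positivity) hx0]
    calc φ a * x ≤ (C * φ x) * (2 * a) :=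
          mul_le_mul (hφ a x ha hx.1.le hx.2).2 hx.2 hx0.le (by nlinarith [hpos x hx0])
      _ = φ x * (2 * C * a) := by ring
  have h := setIntegral_ge_of_const_le measurableSet_Ioc measure_Ioc_lt_top.ne hlow
    (hφ.integrableOn_Ioc_div hpos hm ha)
  rw [Real.volume_real_Ioc_of_le (by linarith), smul_eq_mul] at h
  calc φ a = 2 * C * ((2 * a - a) * (φ a / (2 * C * a))) := by field_simp; ring
    _ ≤ 2 * C * ∫ x in Ioc a (2 * a), φ x / x := by gcongr

end IsDoublingWith

theorem abs_setAverage_Ioo_sub_le_of_campanato {μ : Measure ℝ} {f φ : ℝ → ℝ}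
    {C₀ Cφ N t s : ℝ} (hC₀ : 0 ≤ C₀) (hφ : IsDoublingWith Cφ φ) (hCφ : 0 < Cφ)
    (hφpos : ∀ r, 0 < r → 0 < φ r) (hφm : Measurable φ) (hN : 0 ≤ N)
    (ht : 0 < t) (hts : t ≤ s) (hs : s ≤ 2 * t)
    (hμt : μ (Ioo (-t) t) ≠ 0) (hμt_fin : μ (Ioo (-t) t) ≠ ∞) (hμs_fin : μ (Ioo (-s) s) ≠ ∞)
    (hdub : μ (Ioo (-(2 * t)) (2 * t)) ≤ ENNReal.ofReal C₀ * μ (Ioo (-t) t))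
    (hf : IntegrableOn f (Ioo (-s) s) μ)
    (hcamp : ∫ x in Ioo (-s) s, |f x - ⨍ y in Ioo (-s) s, f y ∂μ| ∂μ ≤
      N * φ s * μ.real (Ioo (-s) s)) :
    |⨍ y in Ioo (-t) t, f y ∂μ - ⨍ y in Ioo (-s) s, f y ∂μ| ≤
      2 * C₀ * Cφ ^ 2 * N * ∫ x in Ioc t (2 * t), φ x / x := by
  calc _ ≤ C₀ * (N * φ s) :=
        abs_setAverage_sub_setAverage_le (Ioo_subset_Ioo (by linarith) hts) hμt hμs_fin hf
          (mul_nonneg hN (hφpos s (ht.trans_le hts)).le)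
          (measureReal_Ioo_le_of_doubling hC₀ hdub hμt_fin hs) hcamp
    _ ≤ C₀ * (N * (Cφ * φ t)) := by gcongr; exact (hφ t s ht hts hs).1
    _ ≤ C₀ * (N * (Cφ * (2 * Cφ * ∫ x in Ioc t (2 * t), φ x / x))) := by
        gcongr; exact hφ.le_mul_setIntegral_Ioc_div hφpos hφm hCφ ht
    _ = _ := by ring

section Dyadic

theorem exists_le_two_pow_mul {r : ℝ} (hr : 0 < r) (s : ℝ) : ∃ k : ℕ, s ≤ 2 ^ k * r := by
  obtain ⟨k, hk⟩ := pow_unbounded_of_one_lt (s / r) one_lt_two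
  exact ⟨k, by rw [div_lt_iff₀ hr] at hk; exact hk.le⟩

theorem Ioc_two_pow_succ_mul {a : ℝ} (ha : 0 < a) (k : ℕ) :
    Ioc a (2 ^ (k + 1) * a) = Ioc a (2 * a) ∪ Ioc (2 * a) (2 ^ k * (2 * a)) := by
  rw [Ioc_union_Ioc_eq_Ioc (by linarith) (le_mul_of_one_le_left (by positivity)
    (one_le_pow₀ one_le_two)), pow_succ, mul_assoc]

variable {E : Type*} [NormedAddCommGroup E] {g : ℝ → E}

theorem integrableOn_Ioc_of_dyadic (hg : ∀ a, 0 < a → IntegrableOn g (Ioc a (2 * a)))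
    {a : ℝ} (ha : 0 < a) (b : ℝ) : IntegrableOn g (Ioc a b) := by
  have hpow : ∀ k : ℕ, ∀ a, 0 < a → IntegrableOn g (Ioc a (2 ^ k * a)) := by
    intro k
    induction k with
    | zero => simp
    | succ k ih =>
      intro a ha
      rw [Ioc_two_pow_succ_mul ha]
      exact (hg a ha).union (ih _ (by positivity))
  obtain ⟨k, hk⟩ := exists_le_two_pow_mul ha b
  exact (hpow k a ha).mono_set (Ioc_subset_Ioc_right hk)

theorem integrableOn_Ioi_of_dyadic (hg : ∀ a, 0 < a → IntegrableOn g (Ioc a (2 * a)))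
    {b r : ℝ} (hb : IntegrableOn g (Ioi b)) (hr : 0 < r) : IntegrableOn g (Ioi r) := by
  refine ((integrableOn_Ioc_of_dyadic hg hr b).union hb).mono_set fun x hx ↦ ?_
  rcases le_or_gt x b with hxb | hxb
  exacts [Or.inl ⟨hx, hxb⟩, Or.inr hxb]

end Dyadic

section Telescoping

variable {A g : ℝ → ℝ}

theorem abs_sub_le_setIntegral_Ioc_of_dyadic (hg : ∀ a, 0 < a → IntegrableOn g (Ioc a (2 * a)))
    (hg₀ : ∀ x, 0 < x → 0 ≤ g x)
    (hstep : ∀ t s, 0 < t → t ≤ s → s ≤ 2 * t → |A t - A s| ≤ ∫ x in Ioc t (2 * t), g x)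
    (k : ℕ) {r s : ℝ} (hr : 0 < r) (hrs : r ≤ s) (hs : s ≤ 2 ^ k * r) :
    |A r - A s| ≤ ∫ x in Ioc r (2 ^ k * r), g x := by
  induction k generalizing r with
  | zero => simp [le_antisymm hs (by simpa using hrs)]
  | succ k ih =>
    rw [Ioc_two_pow_succ_mul hr k, setIntegral_union (Ioc_disjoint_Ioc_of_le le_rfl)
      measurableSet_Ioc (hg r hr) (integrableOn_Ioc_of_dyadic hg (by positivity) _)]
    rcases le_or_gt s (2 * r) with hs2 | hs2
    · have htail : 0 ≤ ∫ x in Ioc (2 * r) (2 ^ k * (2 * r)), g x :=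
        setIntegral_nonneg measurableSet_Ioc fun x hx ↦ hg₀ x (by linarith [hx.1])
      linarith [hstep r s hr hrs hs2]
    · calc |A r - A s| ≤ |A r - A (2 * r)| + |A (2 * r) - A s| := abs_sub_le _ _ _
        _ ≤ _ := add_le_add (hstep r _ hr (by linarith) le_rfl)
          (ih (by positivity) hs2.le (by rwa [pow_succ, mul_assoc] at hs))

theorem abs_sub_le_setIntegral_Ioi_of_dyadic (hg : ∀ a, 0 < a → IntegrableOn g (Ioi a))
    (hg₀ : ∀ x, 0 < x → 0 ≤ g x)
    (hstep : ∀ t s, 0 < t → t ≤ s → s ≤ 2 * t → |A t - A s| ≤ ∫ x in Ioc t (2 * t), g x)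
    {r s : ℝ} (hr : 0 < r) (hrs : r ≤ s) :
    |A r - A s| ≤ ∫ x in Ioi r, g x := by
  obtain ⟨k, hk⟩ := exists_le_two_pow_mul hr s
  refine (abs_sub_le_setIntegral_Ioc_of_dyadic (fun a ha ↦ (hg a ha).mono_set Ioc_subset_Ioi_self)
    hg₀ hstep k hr hrs hk).trans
    (setIntegral_mono_set (hg r hr) ?_ Ioc_subset_Ioi_self.eventuallyLE)
  filter_upwards [ae_restrict_mem measurableSet_Ioi] with x hx using hg₀ x (hr.trans hx)

end Telescoping

theorem exists_tendsto_atTop_of_abs_sub_le {A b : ℝ → ℝ}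
    (hA : ∀ r s, 0 < r → r ≤ s → |A r - A s| ≤ b r) (hb : Tendsto b atTop (𝓝 0)) :
    ∃ σ, Tendsto A atTop (𝓝 σ) ∧ ∀ r, 0 < r → |A r - σ| ≤ b r := by
  have hcauchy : CauchySeq A := by
    refine Metric.cauchySeq_iff'.2 fun ε hε ↦ ?_
    obtain ⟨R, hR, hbR⟩ := ((eventually_gt_atTop 0).and (hb.eventually (gt_mem_nhds hε))).exists
    exact ⟨R, fun s hs ↦ by rw [dist_comm, Real.dist_eq]; exact (hA R s hR hs).trans_lt hbR⟩
  obtain ⟨σ, hσ⟩ := cauchySeq_tendsto_of_complete hcauchy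
  refine ⟨σ, hσ, fun r hr ↦ le_of_tendsto (tendsto_const_nhds.sub hσ).abs ?_⟩
  filter_upwards [eventually_ge_atTop r] with s hs using hA r s hr hs

/-- For a doubling measure μ on ℝ and doubling φ with ∫_1^∞ φ(t)/t dt < ∞, Campanato
functions have convergent averages f_B(r) as r → ∞, with
|f_B(r) − σ(f)| ≤ C N ∫_r^∞ φ(t)/t dt. -/
theorem campanato_average_limit
    (μ : Measure ℝ) (C₀ : ℝ) (hC₀ : 1 ≤ C₀)
    (hpos : ∀ r : ℝ, 0 < r → 0 < μ (Set.Ioo (-r) r))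
    (hfin : ∀ r : ℝ, 0 < r → μ (Set.Ioo (-r) r) < ⊤)
    (hdub : ∀ r : ℝ, 0 < r →
      μ (Set.Ioo (-(2*r)) (2*r)) ≤ ENNReal.ofReal C₀ * μ (Set.Ioo (-r) r))
    (φ : ℝ → ℝ) (Cφ : ℝ) (hCφ : 1 ≤ Cφ) (hφpos : ∀ r, 0 < r → 0 < φ r)
    (hφ : ∀ r s : ℝ, 0 < r → 0 < s → 1/2 ≤ r / s → r / s ≤ 2 →
      1 / Cφ ≤ φ r / φ s ∧ φ r / φ s ≤ Cφ)
    (hφm : Measurable φ)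
    (hφint : IntegrableOn (fun t => φ t / t) (Set.Ioi (1:ℝ)) volume)
    (f : ℝ → ℝ) (hloc : ∀ r : ℝ, 0 < r → IntegrableOn f (Set.Ioo (-r) r) μ)
    (N : ℝ) (hN : 0 ≤ N)
    (hcamp : ∀ r : ℝ, 0 < r →
      (∫ x in Set.Ioo (-r) r,
          |f x - (μ (Set.Ioo (-r) r)).toReal⁻¹ * ∫ y in Set.Ioo (-r) r, f y ∂μ| ∂μ)
        ≤ N * φ r * (μ (Set.Ioo (-r) r)).toReal) :
    ∃ σf : ℝ,
      Tendsto (fun r : ℝ =>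
          (μ (Set.Ioo (-r) r)).toReal⁻¹ * ∫ y in Set.Ioo (-r) r, f y ∂μ) atTop (nhds σf) ∧
      ∃ C : ℝ, 0 < C ∧ ∀ r : ℝ, 0 < r →
        |(μ (Set.Ioo (-r) r)).toReal⁻¹ * (∫ y in Set.Ioo (-r) r, f y ∂μ) - σf|
          ≤ C * N * ∫ t in Set.Ioi r, φ t / t := by
  have hφD := isDoublingWith_of_ratio_bounds hφpos hφ
  have hK : 0 < 2 * C₀ * Cφ ^ 2 := by positivity
  have hgI : ∀ a, 0 < a → IntegrableOn (fun x ↦ φ x / x) (Ioi a) := fun a ha ↦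
    integrableOn_Ioi_of_dyadic (fun b hb ↦ hφD.integrableOn_Ioc_div hφpos hφm hb) hφint ha
  have havg : ∀ r, (μ (Ioo (-r) r)).toReal⁻¹ * ∫ y in Ioo (-r) r, f y ∂μ =
      ⨍ y in Ioo (-r) r, f y ∂μ := fun r ↦ by rw [setAverage_eq, smul_eq_mul]; rfl
  simp only [havg] at hcamp ⊢
  have hstep : ∀ t s, 0 < t → t ≤ s → s ≤ 2 * t →
      |⨍ y in Ioo (-t) t, f y ∂μ - ⨍ y in Ioo (-s) s, f y ∂μ| ≤
        ∫ x in Ioc t (2 * t), 2 * C₀ * Cφ ^ 2 * N * (φ x / x) := fun t s ht hts hs ↦ by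
    have hs0 : 0 < s := ht.trans_le hts
    rw [integral_const_mul]
    exact abs_setAverage_Ioo_sub_le_of_campanato (by linarith) hφD (by linarith) hφpos hφm hN
      ht hts hs (hpos t ht).ne' (hfin t ht).ne (hfin s hs0).ne (hdub t ht) (hloc s hs0)
      (hcamp s hs0)
  obtain ⟨σ, hlim, hσ⟩ := exists_tendsto_atTop_of_abs_sub_le
    (A := fun r ↦ ⨍ y in Ioo (-r) r, f y ∂μ)
    (b := fun r ↦ 2 * C₀ * Cφ ^ 2 * N * ∫ x in Ioi r, φ x / x)
    (fun r s hr hrs ↦ by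
      rw [← integral_const_mul]
      exact abs_sub_le_setIntegral_Ioi_of_dyadic (fun a ha ↦ (hgI a ha).const_mul _)
        (fun x hx ↦ mul_nonneg (mul_nonneg hK.le hN) (div_nonneg (hφpos x hx).le hx.le))
        hstep hr hrs)
    (by simpa using ((tendsto_integral_Ioi_zero (f := fun x ↦ φ x / x) (μ := volume)
      tendsto_id).const_mul (2 * C₀ * Cφ ^ 2 * N)))
  exact ⟨σ, hlim, 2 * C₀ * Cφ ^ 2, hK, hσ⟩
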